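/- arXiv:2001.05147 — 3 statements merged into one kernel-verified Lean document; each statement's English description precedes it below -/
import Mathlib

section
/- The Grunsky coefficients associated with any sequence (a_k)_{k≥1} of complex numbers satisfy the symmetry relation k·c_{m,k} = m·c_{k,m} for all m, k ≥ 1; in particular c_{1,m} = a_m for all m ≥ 1. -/
/-!
Write `g(z) = 1/z + ∑ aₖ zᵏ` and let `Fₘ` be its Faber polynomials. The Grunsky recursion is the
coefficient form of the Faber recursion, so `Fₘ(g(z)) = z⁻ᵐ + ∑ₖ c_{m,k} zᵏ`. Since
`Fₘ(g)' · Fₖ(g)` is the derivative of a polynomial in `g`, its residue `k c_{m,k} - m c_{k,m}`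
vanishes. The expansion `Fₘ(g(z)) = z⁻ᵐ + O(z)` is proved by induction along the way, its
`z`-coefficient coming from the same residue argument against `F₁(g) = g`. All Laurent series are
multiplied by a power of `z` so as to work with formal power series.
-/

/-- The Grunsky coefficients `c_{m,k}` associated with a sequence `a : ℕ → ℂ`
(the relevant values of `a` are `a 1, a 2, …`), defined by the recursion
`c_{m,1} = m·a_m` and
`c_{m,k+1} = c_{m+1,k} − a_{m+k} + ∑_{s=1}^{m−1} a_{m−s}·c_{s,k} − ∑_{s=1}^{k−1} a_{k−s}·c_{m,s}`
for `m, k ≥ 1` (empty sums are `0`).  The value for second index `0` is irrelevant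
and set to `0`. -/
noncomputable def grunsky (a : ℕ → ℂ) : ℕ → ℕ → ℂ
  | _, 0 => 0
  | m, 1 => (m : ℂ) * a m
  | m, (k + 2) =>
      grunsky a (m + 1) (k + 1) - a (m + (k + 1)) +
        ∑ s ∈ Finset.Icc 1 (m - 1), a (m - s) * grunsky a s (k + 1) -
        ∑ s ∈ (Finset.Icc 1 k).attach, a (k + 1 - s.1) * grunsky a m s.1
  termination_by _ k => k
  decreasing_by
    · omega
    · omega
    · have hs := s.2
      rw [Finset.mem_Icc] at hs
      omega

open PowerSeries
open Finset hiding mk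

namespace PowerSeries

section CommSemiring

variable {R : Type*} [CommSemiring R]

theorem coeff_X_mul_derivative (u : R⟦X⟧) (n : ℕ) :
    coeff n (X * d⁄dX R u) = n * coeff n u := by
  cases n with
  | zero => simp
  | succ n => rw [coeff_succ_X_mul, coeff_derivative, mul_comm]; push_cast; rfl

theorem X_mul_derivative_X_pow (j : ℕ) :
    X * d⁄dX R (X ^ j : R⟦X⟧) = (j : R⟦X⟧) * X ^ j := by
  cases j with
  | zero => simp
  | succ j => rw [derivative_pow, derivative_X]; push_cast; ring

theorem mk_coeff_one_add_X_pow_mul (n : ℕ) (u : R⟦X⟧) :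
    (mk fun t => coeff (n + 1 + t) (1 + X ^ (n + 1) * u)) = u := by
  ext t
  rw [coeff_mk, map_add, coeff_one, if_neg (by omega), zero_add, add_comm, coeff_X_pow_mul]

theorem coeff_X_mul_mk_mul (b : ℕ → R) (u : R⟦X⟧) (t : ℕ) :
    coeff t (X * (mk fun n => b (n + 1)) * u) = ∑ s ∈ Icc 1 t, b (t + 1 - s) * coeff (s - 1) u := by
  rcases t with _ | t
  · simp
  rw [mul_assoc, coeff_succ_X_mul, coeff_mul,
    Nat.sum_antidiagonal_eq_sum_range_succ (fun i j => coeff i (mk fun n => b (n + 1)) * coeff j u),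
    ← Ico_add_one_right_eq_Icc, sum_Ico_eq_sum_range, ← sum_range_reflect]
  refine sum_congr (by simp) fun k hk => ?_
  have hk : k < t + 1 := mem_range.1 hk
  simp only [coeff_mk]
  congr 3 <;> omega

/-- The series `X ^ N * P (f / X)` with `P` a polynomial of degree at most `N`. -/
def homogeneousSpan (f : R⟦X⟧) (N : ℕ) : Submodule R R⟦X⟧ :=
  Submodule.span R {u | ∃ i j, i + j = N ∧ u = f ^ i * X ^ j}

namespace homogeneousSpan

variable {f : R⟦X⟧}

theorem pow_mul_X_pow_mem (i j : ℕ) : f ^ i * X ^ j ∈ homogeneousSpan f (i + j) :=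
  Submodule.subset_span ⟨i, j, rfl, rfl⟩

theorem one_mem : (1 : R⟦X⟧) ∈ homogeneousSpan f 0 := by
  simpa using pow_mul_X_pow_mem (f := f) 0 0

theorem self_mem : f ∈ homogeneousSpan f 1 := by
  simpa using pow_mul_X_pow_mem (f := f) 1 0

theorem X_pow_mem (j : ℕ) : X ^ j ∈ homogeneousSpan f j := by
  simpa using pow_mul_X_pow_mem (f := f) 0 j

theorem mul_mem {M N : ℕ} {u v : R⟦X⟧} (hu : u ∈ homogeneousSpan f M)
    (hv : v ∈ homogeneousSpan f N) : u * v ∈ homogeneousSpan f (M + N) := by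
  have huv := Submodule.mul_mem_mul hu hv
  rw [homogeneousSpan, homogeneousSpan, Submodule.span_mul_span] at huv
  refine Submodule.span_mono ?_ huv
  rintro _ ⟨_, ⟨i, j, rfl, rfl⟩, _, ⟨p, q, rfl, rfl⟩, rfl⟩
  exact ⟨i + p, j + q, by ring, by ring⟩

end homogeneousSpan

end CommSemiring

section Field

variable {K : Type*} [Field K] [CharZero K]

/-- For `g = f / X` and `n = i + p`, this is the vanishing of the residue of `g ^ (n - 1) * g'`. -/
theorem coeff_pow_mul_X_mul_derivative_pow (f : K⟦X⟧) (i p : ℕ) :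
    coeff (i + p) (f ^ p * (X * d⁄dX K (f ^ i))) = i * coeff (i + p) (f ^ (i + p)) := by
  rcases i with _ | i
  · simp
  have hD : ((i + 1 + p : ℕ) : K⟦X⟧) * (f ^ p * d⁄dX K (f ^ (i + 1)))
      = (i + 1 : ℕ) * d⁄dX K (f ^ (i + 1 + p)) := by
    rw [derivative_pow, derivative_pow, Nat.add_sub_cancel, show i + 1 + p - 1 = i + p by omega]
    ring
  have hn : ((i + 1 + p : ℕ) : K) ≠ 0 := Nat.cast_ne_zero.2 (by omega)
  apply mul_left_cancel₀ hn
  have h := congrArg (coeff (i + 1 + p)) (congrArg (X * ·) hD)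
  simp only [← map_natCast (C (R := K)), mul_left_comm X (C _), coeff_C_mul] at h
  rw [mul_left_comm, h, coeff_X_mul_derivative]
  push_cast
  ring

/-- With `g = f / X`, `u = X ^ m * P g` and `v = X ^ k * Q g`, this says that `(P g)' * Q g` has
no residue. -/
theorem coeff_X_mul_derivative_mul_of_mem_homogeneousSpan {f : K⟦X⟧} {m k : ℕ} {u v : K⟦X⟧}
    (hu : u ∈ homogeneousSpan f m) (hv : v ∈ homogeneousSpan f k) :
    coeff (m + k) (X * d⁄dX K u * v) = m * coeff (m + k) (u * v) := by
  induction hu using Submodule.span_induction with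
  | zero => simp
  | add u₁ u₂ _ _ h₁ h₂ => simp only [map_add, mul_add, add_mul, h₁, h₂]
  | smul c u _ h =>
    rw [Derivation.map_smul, mul_smul_comm, smul_mul_assoc, smul_mul_assoc, map_smul, map_smul, h,
      smul_eq_mul, smul_eq_mul]
    ring
  | mem u hu =>
  obtain ⟨i, j, rfl, rfl⟩ := hu
  induction hv using Submodule.span_induction with
  | zero => simp
  | add v₁ v₂ _ _ h₁ h₂ => simp only [mul_add, map_add, h₁, h₂]
  | smul c v _ h => simp only [mul_smul_comm, coeff_smul, h, smul_eq_mul]; ring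
  | mem v hv =>
  obtain ⟨p, q, rfl, rfl⟩ := hv
  have hexpand : X * d⁄dX K (f ^ i * X ^ j) * (f ^ p * X ^ q)
      = X ^ (j + q) * (f ^ p * (X * d⁄dX K (f ^ i)))
        + (j : K⟦X⟧) * (X ^ (j + q) * f ^ (i + p)) := by
    rw [Derivation.leibniz, smul_eq_mul, smul_eq_mul, pow_add, pow_add]
    linear_combination (f ^ i * f ^ p * X ^ q) * X_mul_derivative_X_pow (R := K) j
  rw [hexpand, show i + j + (p + q) = i + p + (j + q) by ring, map_add, coeff_X_pow_mul,
    coeff_pow_mul_X_mul_derivative_pow, ← map_natCast (C (R := K)), coeff_C_mul, coeff_X_pow_mul,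
    show f ^ i * X ^ j * (f ^ p * X ^ q) = X ^ (j + q) * f ^ (i + p) by ring, coeff_X_pow_mul]
  push_cast
  ring

theorem coeff_symm_of_mem_homogeneousSpan {f : K⟦X⟧} {m k : ℕ} {u v : K⟦X⟧}
    (hu : u ∈ homogeneousSpan f m) (hv : v ∈ homogeneousSpan f k)
    (hu₁ : X ^ (m + 1) ∣ u - 1) (hv₁ : X ^ (k + 1) ∣ v - 1) :
    (k : K) * coeff (m + k) u = m * coeff (m + k) v := by
  obtain ⟨S, hS⟩ := hu₁
  obtain ⟨T, hT⟩ := hv₁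
  rcases Nat.eq_zero_or_pos (m + k) with h0 | hpos
  · obtain ⟨rfl, rfl⟩ : m = 0 ∧ k = 0 := by omega
    simp
  have hvanish (w : K⟦X⟧) : coeff (m + k) (X ^ (m + k + 1) * w) = 0 := by
    rw [coeff_X_pow_mul', if_neg (by omega)]
  have hXdu : X * d⁄dX K u = X ^ (m + 1) * (((m + 1 : ℕ) : K⟦X⟧) * S + X * d⁄dX K S) := by
    rw [← sub_add_cancel u 1, map_add, derivative_one, add_zero, hS, Derivation.leibniz,
      derivative_pow, derivative_X, Nat.add_sub_cancel, smul_eq_mul, smul_eq_mul]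
    ring
  have hlhs : coeff (m + k) (X * d⁄dX K u * v) = (m + k : ℕ) * coeff (m + k) u := by
    rw [show X * d⁄dX K u * v = X * d⁄dX K u
        + X ^ (m + k + 1) * ((((m + 1 : ℕ) : K⟦X⟧) * S + X * d⁄dX K S) * X * T) by
      rw [hXdu, ← sub_add_cancel v 1, hT]; ring,
      map_add, hvanish, add_zero, coeff_X_mul_derivative]
  have hrhs : coeff (m + k) (u * v) = coeff (m + k) u + coeff (m + k) v := by
    rw [show u * v = u + v - 1 + X ^ (m + k + 1) * (X * S * T) by
      rw [← sub_add_cancel u 1, ← sub_add_cancel v 1, hS, hT]; ring,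
      map_add, hvanish, map_sub, map_add, coeff_one, if_neg (by omega)]
    ring
  have heuler := coeff_X_mul_derivative_mul_of_mem_homogeneousSpan hu hv
  rw [hlhs, hrhs] at heuler
  push_cast at heuler
  linear_combination heuler

end Field

end PowerSeries

namespace Grunsky

variable (a : ℕ → ℂ)

/-- `z g(z)` for `g(z) = 1/z + ∑_{k ≥ 1} aₖ zᵏ`. -/
noncomputable def zg : ℂ⟦X⟧ := 1 + X ^ 2 * mk fun n => a (n + 1)

/-- `zᵐ Fₘ(g(z))`, from the Faber recursion `F_{m+1}(w) = w Fₘ(w) - ∑_{s<m} a_{m-s} F_s(w) - m aₘ`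
with `F₀ = 1`. -/
noncomputable def faber : ℕ → ℂ⟦X⟧
  | 0 => 1
  | m + 1 => zg a * faber m - ∑ s : Fin m, C (a (m - s)) * X ^ (m + 1 - s) * faber s
      - C (m * a m) * X ^ (m + 1)

/-- `(Fₘ(g(z)) - z⁻ᵐ) / z`, once `faber_eq_one_add_X_pow_mul_faberTail` is known. -/
noncomputable def faberTail (m : ℕ) : ℂ⟦X⟧ := mk fun t => coeff (m + 1 + t) (faber a m)

theorem faber_succ (m : ℕ) :
    faber a (m + 1) = zg a * faber a m
      - ∑ s ∈ range m, C (a (m - s)) * X ^ (m + 1 - s) * faber a s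
      - C (m * a m) * X ^ (m + 1) := by
  rw [faber, Fin.sum_univ_eq_sum_range (fun s => C (a (m - s)) * X ^ (m + 1 - s) * faber a s)]

theorem faber_mem_homogeneousSpan (m : ℕ) : faber a m ∈ homogeneousSpan (zg a) m := by
  induction m using Nat.strong_induction_on with
  | _ m ih =>
  rcases m with _ | m
  · rw [faber]; exact homogeneousSpan.one_mem
  have hC (c : ℂ) {n : ℕ} {u : ℂ⟦X⟧} (hu : u ∈ homogeneousSpan (zg a) n) :
      C c * u ∈ homogeneousSpan (zg a) n := by
    rw [← smul_eq_C_mul]; exact Submodule.smul_mem _ c hu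
  rw [faber_succ]
  refine sub_mem (sub_mem ?_ (sum_mem fun s hs => ?_)) (hC _ (homogeneousSpan.X_pow_mem _))
  · simpa [add_comm] using homogeneousSpan.mul_mem homogeneousSpan.self_mem (ih m (by omega))
  · have hs : s < m := mem_range.1 hs
    rw [mul_assoc]
    refine hC _ ?_
    simpa [show m + 1 - s + s = m + 1 by omega] using
      homogeneousSpan.mul_mem (homogeneousSpan.X_pow_mem (f := zg a) (m + 1 - s)) (ih s (by omega))

theorem X_sq_mul_mk_eq_sum_add (m : ℕ) :
    X ^ 2 * (mk fun n => a (n + 1)) = ∑ s ∈ range m, C (a (m - s)) * X ^ (m + 1 - s)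
      + X ^ (m + 2) * mk fun t => a (m + 1 + t) := by
  induction m with
  | zero => simp [add_comm]
  | succ m ih =>
    have hsplit :
        (mk fun t => a (m + 1 + t)) = C (a (m + 1)) + X * mk fun t => a (m + 1 + 1 + t) := by
      ext (_ | t)
      · simp
      · simp only [coeff_mk, map_add, coeff_C, coeff_succ_X_mul, if_neg t.succ_ne_zero, zero_add]
        congr 1; omega
    rw [sum_range_succ', ih, hsplit]
    simp only [Nat.add_sub_add_right, Nat.sub_zero]
    ring

theorem faber_succ_eq_of_tails {m : ℕ}
    (hshape : ∀ s ≤ m, faber a s = 1 + X ^ (s + 1) * faberTail a s)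
    (hlead : constantCoeff (faberTail a m) = m * a m) :
    faber a (m + 1) = 1 + X ^ (m + 2) * ((mk fun t => a (m + 1 + t))
      + (mk fun t => coeff (t + 1) (faberTail a m))
      + X * (mk fun n => a (n + 1)) * faberTail a m
      - ∑ s ∈ range m, C (a (m - s)) * faberTail a s) := by
  have hsum : ∑ s ∈ range m, C (a (m - s)) * X ^ (m + 1 - s) * faber a s
      = ∑ s ∈ range m, C (a (m - s)) * X ^ (m + 1 - s)
        + X ^ (m + 2) * ∑ s ∈ range m, C (a (m - s)) * faberTail a s := by
    rw [mul_sum, ← sum_add_distrib]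
    refine sum_congr rfl fun s hs => ?_
    have hs : s < m := mem_range.1 hs
    rw [hshape s hs.le, show m + 2 = (m + 1 - s) + (s + 1) by omega, pow_add]
    ring
  have htail := eq_X_mul_shift_add_const (faberTail a m)
  rw [hlead] at htail
  rw [faber_succ, hsum, hshape m le_rfl, zg]
  linear_combination X_sq_mul_mk_eq_sum_add a m + X ^ (m + 1) * htail

theorem faberTail_eq_of_faber_eq {m : ℕ} {u : ℂ⟦X⟧} (h : faber a m = 1 + X ^ (m + 1) * u) :
    faberTail a m = u := by
  rw [faberTail, h]
  exact mk_coeff_one_add_X_pow_mul m u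

theorem faberTail_zero : faberTail a 0 = 0 := by
  ext t
  simp [faberTail, faber, coeff_one]

theorem constantCoeff_faberTail {m : ℕ} (hm : faber a m = 1 + X ^ (m + 1) * faberTail a m) :
    constantCoeff (faberTail a m) = m * a m := by
  have hsym := coeff_symm_of_mem_homogeneousSpan (faber_mem_homogeneousSpan a m)
    homogeneousSpan.self_mem ⟨faberTail a m, by rw [hm]; ring⟩
    ⟨mk fun n => a (n + 1), by rw [zg]; ring⟩
  have hfaber : coeff (m + 1) (faber a m) = constantCoeff (faberTail a m) := by
    rw [hm, map_add, coeff_one, if_neg (by omega), zero_add, coeff_X_pow_mul', if_pos le_rfl,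
      Nat.sub_self, coeff_zero_eq_constantCoeff]
  have hzg : (m : ℂ) * coeff (m + 1) (zg a) = m * a m := by
    rcases m with _ | m
    · simp
    · rw [zg, map_add, coeff_one, if_neg (by omega), zero_add, coeff_X_pow_mul', if_pos (by omega),
        coeff_mk, show m + 1 + 1 - 2 + 1 = m + 1 by omega]
  rw [← hfaber, ← hzg, ← hsym, Nat.cast_one, one_mul]

theorem faber_eq_one_add_X_pow_mul_faberTail (m : ℕ) :
    faber a m = 1 + X ^ (m + 1) * faberTail a m := by
  induction m using Nat.strong_induction_on with
  | _ m ih =>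
  rcases m with _ | m
  · simp [faberTail_zero, faber]
  have hsucc := faber_succ_eq_of_tails a (fun s hs => ih s (by omega))
    (constantCoeff_faberTail a (ih m (by omega)))
  rw [faberTail_eq_of_faber_eq a hsucc]
  exact hsucc

theorem faberTail_succ (m : ℕ) :
    faberTail a (m + 1) = (mk fun t => a (m + 1 + t))
      + (mk fun t => coeff (t + 1) (faberTail a m))
      + X * (mk fun n => a (n + 1)) * faberTail a m
      - ∑ s ∈ range m, C (a (m - s)) * faberTail a s :=
  faberTail_eq_of_faber_eq a <| faber_succ_eq_of_tails a
    (fun s _ => faber_eq_one_add_X_pow_mul_faberTail a s)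
    (constantCoeff_faberTail a (faber_eq_one_add_X_pow_mul_faberTail a m))

theorem coeff_faber_symm (m k : ℕ) :
    (k : ℂ) * coeff (m + k) (faber a m) = m * coeff (m + k) (faber a k) :=
  coeff_symm_of_mem_homogeneousSpan (faber_mem_homogeneousSpan a m)
    (faber_mem_homogeneousSpan a k)
    ⟨faberTail a m, by rw [faber_eq_one_add_X_pow_mul_faberTail a m]; ring⟩
    ⟨faberTail a k, by rw [faber_eq_one_add_X_pow_mul_faberTail a k]; ring⟩

theorem grunsky_succ_succ (m k : ℕ) :
    grunsky a m (k + 2) = grunsky a (m + 1) (k + 1) - a (m + (k + 1))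
      + ∑ s ∈ Icc 1 (m - 1), a (m - s) * grunsky a s (k + 1)
      - ∑ s ∈ Icc 1 k, a (k + 1 - s) * grunsky a m s := by
  rw [grunsky, sum_attach (Icc 1 k) (fun s => a (k + 1 - s) * grunsky a m s)]

theorem grunsky_eq_coeff_faberTail (t : ℕ) :
    ∀ m, 1 ≤ m → grunsky a m (t + 1) = coeff t (faberTail a m) := by
  induction t using Nat.strong_induction_on with
  | _ t ih =>
  intro m hm
  rcases t with _ | t
  · rw [coeff_zero_eq_constantCoeff,
      constantCoeff_faberTail a (faber_eq_one_add_X_pow_mul_faberTail a m), grunsky]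
  obtain ⟨m, rfl⟩ : ∃ m', m = m' + 1 := ⟨m - 1, by omega⟩
  have hrows : ∑ s ∈ Icc 1 m, a (m + 1 - s) * grunsky a s (t + 1)
      = ∑ s ∈ range (m + 1), a (m + 1 - s) * coeff t (faberTail a s) := by
    rw [sum_range_eq_add_Ico _ (by omega), faberTail_zero, map_zero, mul_zero, zero_add,
      Ico_add_one_right_eq_Icc]
    exact sum_congr rfl fun s hs => by rw [ih t (by omega) s (mem_Icc.1 hs).1]
  have hcols : ∑ s ∈ Icc 1 t, a (t + 1 - s) * grunsky a (m + 1) s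
      = ∑ s ∈ Icc 1 t, a (t + 1 - s) * coeff (s - 1) (faberTail a (m + 1)) := by
    refine sum_congr rfl fun s hs => ?_
    obtain ⟨s, rfl⟩ : ∃ s', s = s' + 1 := ⟨s - 1, by have := (mem_Icc.1 hs).1; omega⟩
    rw [ih s (by have := (mem_Icc.1 hs).2; omega) (m + 1) hm, Nat.add_sub_cancel]
  rw [grunsky_succ_succ, Nat.add_sub_cancel, hrows, hcols, ih t (by omega) (m + 1 + 1) (by omega),
    faberTail_succ, map_sub, map_add, map_add, coeff_X_mul_mk_mul, map_sum]
  simp only [coeff_mk, coeff_C_mul]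
  rw [show m + 1 + (t + 1) = m + 1 + 1 + t by omega]
  ring

theorem grunsky_eq_coeff_faber {m k : ℕ} (hm : 1 ≤ m) (hk : 1 ≤ k) :
    grunsky a m k = coeff (m + k) (faber a m) := by
  obtain ⟨k, rfl⟩ : ∃ k', k = k' + 1 := ⟨k - 1, by omega⟩
  rw [grunsky_eq_coeff_faberTail a k m hm, faberTail, coeff_mk, add_right_comm, add_assoc]

end Grunsky

/-- The Grunsky coefficients associated with any sequence `(a_k)_{k≥1}`
of complex numbers satisfy the symmetry relation `k·c_{m,k} = m·c_{k,m}` for all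
`m, k ≥ 1`; in particular `c_{1,m} = a_m` for all `m ≥ 1`. -/
theorem grunsky_symmetry (a : ℕ → ℂ) :
    (∀ m k : ℕ, 1 ≤ m → 1 ≤ k →
      (k : ℂ) * grunsky a m k = (m : ℂ) * grunsky a k m) ∧
    (∀ m : ℕ, 1 ≤ m → grunsky a 1 m = a m) := by
  have hsymm (m k : ℕ) (hm : 1 ≤ m) (hk : 1 ≤ k) :
      (k : ℂ) * grunsky a m k = (m : ℂ) * grunsky a k m := by
    rw [Grunsky.grunsky_eq_coeff_faber a hm hk, Grunsky.grunsky_eq_coeff_faber a hk hm,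
      add_comm k m]
    exact Grunsky.coeff_faber_symm a m k
  refine ⟨hsymm, fun m hm => ?_⟩
  have h := hsymm m 1 hm le_rfl
  rw [grunsky, Nat.cast_one, one_mul] at h
  exact (mul_left_cancel₀ (Nat.cast_ne_zero.2 (by omega)) h).symm
end

section
/- Let D ⊂ ℂ be the open disk of radius γ_D > 0 centered at a_0 ∈ ℂ, and let λ ∈ ℝ with |λ| ≥ 1/2. Then the generalized polarization tensors of D satisfy N^{(2)}_{11}(D, λ) = 2πγ_D²/λ and N^{(2)}_{21}(D, λ) = 2·conj(a_0)·N^{(2)}_{11}(D, λ) = 4π·conj(a_0)·γ_D²/λ. -/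
open scoped Real

/-- A bounded simply connected planar domain (identified with a subset of `ℂ`)
with `C²` boundary, bundled with a `C²` boundary parametrization `ρ` (2π-periodic,
injective on a period, with non-vanishing derivative) and the outward unit normal
vector field `ν` along the boundary. -/
structure C2Domain where
  /-- the open set -/
  carrier : Set ℂ
  /-- boundary parametrization -/
  ρ : ℝ → ℂ
  /-- outward unit normal along the boundary, as a function of the parameter -/
  ν : ℝ → ℂ
  isOpen : IsOpen carrier
  isBounded : Bornology.IsBounded carrier
  nonempty : carrier.Nonempty
  simplyConnected : SimplyConnectedSpace carrier
  ρ_contDiff : ContDiff ℝ 2 ρ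
  ρ_periodic : Function.Periodic ρ (2 * π)
  ρ_injOn : Set.InjOn ρ (Set.Ico 0 (2 * π))
  ρ_deriv_ne : ∀ t, deriv ρ t ≠ 0
  range_ρ : Set.range ρ = frontier carrier
  ν_unit : ∀ t, ‖ν t‖ = 1
  ν_orthogonal : ∀ t, ((ν t) * (starRingEnd ℂ) (deriv ρ t)).re = 0
  ν_outward : ∀ t, ∃ ε > 0, ∀ s ∈ Set.Ioo (0 : ℝ) ε, ρ t + (s : ℂ) * ν t ∉ closure carrier

namespace C2Domain

/-- The arclength element `|ρ'(s)|` of the boundary parametrization. -/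
noncomputable def arc (D : C2Domain) (s : ℝ) : ℝ := ‖deriv D.ρ s‖

/-- The Neumann–Poincaré operator `K*_{∂Ω}` associated with `D`, written in the
boundary parametrization: `K*[φ](t) = (1/2π) ∫₀^{2π} ⟨ρ(t)−ρ(s), ν(t)⟩/|ρ(t)−ρ(s)|² φ(s) |ρ'(s)| ds`. -/
noncomputable def npStar (D : C2Domain) (φ : ℝ → ℂ) (t : ℝ) : ℂ :=
  ((1 / (2 * π) : ℝ) : ℂ) *
    ∫ s in (0 : ℝ)..(2 * π),
      ((((D.ρ t - D.ρ s) * (starRingEnd ℂ) (D.ν t)).re /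
          ‖D.ρ t - D.ρ s‖ ^ 2 : ℝ) : ℂ) * φ s * ((D.arc s : ℝ) : ℂ)

/-- The integral `∫_{∂Ω} z^n φ(z) dσ(z)` over the boundary of `D`; with `φ` the relevant
density this is the generalized polarization tensor `N_{mn}`. -/
noncomputable def gptInt (D : C2Domain) (n : ℕ) (φ : ℝ → ℂ) : ℂ :=
  ∫ s in (0 : ℝ)..(2 * π), (D.ρ s) ^ n * φ s * ((D.arc s : ℝ) : ℂ)

/-- The Neumann data `∂(z^m)/∂ν` on the boundary of `D`: the directional derivative of
`z ↦ z^m` in the direction of the outward normal, `m z^{m−1} ν`. -/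
noncomputable def data1 (D : C2Domain) (m : ℕ) (t : ℝ) : ℂ :=
  (m : ℂ) * (D.ρ t) ^ (m - 1) * D.ν t

/-- The Neumann data `∂(conj(z)^m)/∂ν` on the boundary of `D`. -/
noncomputable def data2 (D : C2Domain) (m : ℕ) (t : ℝ) : ℂ :=
  (starRingEnd ℂ) (D.data1 m t)

end C2Domain

/-- `IsGPTDensity D lam h φ` asserts that `φ` is a (continuous, 2π-periodic, mean-zero)
density on `∂Ω` solving the integral equation `(λ I − K*_{∂Ω})[φ] = h`. -/
structure IsGPTDensity (D : C2Domain) (lam : ℝ) (h : ℝ → ℂ) (φ : ℝ → ℂ) : Prop where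
  continuous : Continuous φ
  periodic : Function.Periodic φ (2 * π)
  eqn : ∀ t, (lam : ℂ) * φ t - D.npStar φ t = h t
  meanZero : (∫ s in (0 : ℝ)..(2 * π), φ s * ((D.arc s : ℝ) : ℂ)) = 0

/-!
On a circle of radius `γ` the Neumann–Poincaré kernel `⟨x - y, ν_x⟩ / |x - y|²` is the constant
`1 / (2γ)` off the diagonal, so `K*` annihilates mean-zero densities and the integral equation
degenerates to `λ ψ_m = ∂(z̄^m)/∂ν`. With `z = a₀ + γ e^{is}` and `ν = e^{is}`, the integrand of
`N⁽²⁾_{m1}` is then a polynomial in `e^{-is}` for `m = 1, 2`, whose integral over a period is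
`2π` times its constant term.
-/

open Complex ComplexConjugate Polynomial MeasureTheory

lemma exp_ofReal_mul_I_mul_conj (s : ℝ) : exp (s * I) * conj (exp (s * I)) = 1 := by
  rw [mul_conj, normSq_eq_norm_sq, norm_exp_ofReal_mul_I, one_pow, ofReal_one]

lemma integral_conj_exp_ofReal_mul_I_pow (n : ℕ) :
    ∫ s in (0 : ℝ)..2 * π, conj (exp (s * I)) ^ n = if n = 0 then 2 * (π : ℂ) else 0 := by
  split_ifs with hn
  · simp [hn]
  have hc : -(n : ℂ) * I ≠ 0 := by simp [hn, I_ne_zero]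
  have hpow : ∀ s : ℝ, conj (exp (s * I)) ^ n = exp (-(n : ℂ) * I * s) := fun s => by
    rw [← exp_conj, ← exp_nat_mul, map_mul, conj_ofReal, conj_I]
    ring_nf
  have hperiod : exp (-(n : ℂ) * I * (2 * π : ℝ)) = 1 := by
    rw [show -(n : ℂ) * I * (2 * π : ℝ) = ((-n : ℤ) : ℂ) * (2 * π * I) by push_cast; ring]
    exact exp_int_mul_two_pi_mul_I _
  simp_rw [hpow]
  rw [integral_exp_mul_complex hc, hperiod, ofReal_zero, mul_zero, exp_zero, sub_self, zero_div]

lemma integral_eval_conj_exp_ofReal_mul_I (p : ℂ[X]) :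
    ∫ s in (0 : ℝ)..2 * π, p.eval (conj (exp (s * I))) = 2 * π * p.coeff 0 := by
  simp_rw [eval_eq_sum_range]
  rw [intervalIntegral.integral_finsetSum fun i _ =>
    (Continuous.intervalIntegrable (by fun_prop) _ _)]
  simp only [intervalIntegral.integral_const_mul, integral_conj_exp_ofReal_mul_I_pow, mul_ite,
    mul_zero, Finset.sum_ite_eq', Finset.mem_range, Nat.zero_lt_succ, if_true]
  ring

lemma re_sub_mul_conj_eq_normSq_sub_div_two {u v : ℂ} (hu : ‖u‖ = 1) (hv : ‖v‖ = 1) :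
    ((u - v) * conj u).re = normSq (u - v) / 2 := by
  have hu' : normSq u = 1 := by rw [normSq_eq_norm_sq, hu, one_pow]
  have hv' : normSq v = 1 := by rw [normSq_eq_norm_sq, hv, one_pow]
  have hsymm : (v * conj u).re = (u * conj v).re := by
    rw [← conj_re, map_mul, conj_conj, mul_comm]
  rw [normSq_sub, sub_mul, sub_re, mul_conj, ofReal_re, hu', hv', hsymm]
  ring

lemma re_chord_mul_conj_div_norm_sq {u v : ℂ} (hu : ‖u‖ = 1) (hv : ‖v‖ = 1) (huv : u ≠ v)
    (R : ℝ) : ((R * (u - v)) * conj u).re / ‖(R : ℂ) * (u - v)‖ ^ 2 = 1 / (2 * R) := by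
  have hne : normSq (u - v) ≠ 0 := normSq_eq_zero.not.mpr (sub_ne_zero.mpr huv)
  rw [mul_assoc, re_ofReal_mul, re_sub_mul_conj_eq_normSq_sub_div_two hu hv, Complex.sq_norm,
    normSq_mul, normSq_ofReal]
  rcases eq_or_ne R 0 with rfl | hR
  · simp
  field_simp

namespace C2Domain

lemma npStar_eq_zero_of_ae_kernel_eq (D : C2Domain) {φ : ℝ → ℂ} {t c : ℝ}
    (hK : ∀ᵐ s, ((D.ρ t - D.ρ s) * conj (D.ν t)).re / ‖D.ρ t - D.ρ s‖ ^ 2 = c)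
    (hφ : ∫ s in (0 : ℝ)..2 * π, φ s * ((D.arc s : ℝ) : ℂ) = 0) : D.npStar φ t = 0 := by
  unfold npStar
  rw [intervalIntegral.integral_congr_ae (hK.mono fun s hs _ => by rw [hs, mul_assoc]),
    intervalIntegral.integral_const_mul, hφ, mul_zero, mul_zero]

lemma gptInt_div_const (D : C2Domain) (n : ℕ) (φ : ℝ → ℂ) (c : ℂ) :
    D.gptInt n (fun t => φ t / c) = D.gptInt n φ / c := by
  unfold gptInt
  simp_rw [mul_div_assoc', div_mul_eq_mul_div]
  exact intervalIntegral.integral_div c _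

end C2Domain

lemma IsGPTDensity.eq_div {D : C2Domain} {lam : ℝ} {h φ : ℝ → ℂ} (hφ : IsGPTDensity D lam h φ)
    (hlam : lam ≠ 0) (hK : ∀ t, D.npStar φ t = 0) : φ = fun t => h t / lam := by
  funext t
  rw [eq_div_iff (ofReal_ne_zero.mpr hlam), ← hφ.eqn t, hK t, sub_zero, mul_comm]

namespace C2Domain

variable {D : C2Domain} {a₀ : ℂ} {γ : ℝ}

lemma arc_eq_of_ρ_eq_circleMap (hρ : D.ρ = circleMap a₀ γ) (hγ : 0 ≤ γ) (s : ℝ) :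
    D.arc s = γ := by
  rw [arc, hρ, deriv_circleMap, norm_mul, norm_circleMap_zero, norm_I, mul_one, abs_of_nonneg hγ]

lemma npStar_eq_zero_of_ρ_eq_circleMap (hρ : D.ρ = circleMap a₀ γ) (hν : D.ν = circleMap 0 1)
    {φ : ℝ → ℂ} (hφ : ∫ s in (0 : ℝ)..2 * π, φ s * ((D.arc s : ℝ) : ℂ) = 0) (t : ℝ) :
    D.npStar φ t = 0 := by
  refine D.npStar_eq_zero_of_ae_kernel_eq (c := 1 / (2 * γ)) ?_ hφ
  filter_upwards [((Set.countable_singleton (circleMap 0 1 t)).preimage_circleMap 0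
    one_ne_zero).ae_notMem volume] with s hs
  have hchord : D.ρ t - D.ρ s = γ * (D.ν t - D.ν s) := by
    simp only [hρ, hν, circleMap, ofReal_one, one_mul, zero_add]
    ring
  rw [hchord, hν]
  exact re_chord_mul_conj_div_norm_sq (by simp) (by simp) (Ne.symm hs) γ

lemma gptInt_one_data2_one (hρ : D.ρ = circleMap a₀ γ) (hν : D.ν = circleMap 0 1) (hγ : 0 ≤ γ) :
    D.gptInt 1 (D.data2 1) = 2 * π * γ ^ 2 := by
  have hpoint : ∀ s : ℝ, D.ρ s ^ 1 * D.data2 1 s * ((D.arc s : ℝ) : ℂ)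
      = (C ((γ : ℂ) ^ 2) + C (a₀ * γ) * X).eval (conj (exp (s * I))) := fun s => by
    simp only [data2, data1, arc_eq_of_ρ_eq_circleMap hρ hγ, hρ, hν, circleMap, eval_add,
      eval_C, eval_mul, eval_X, pow_one, Nat.cast_one, tsub_self, pow_zero, mul_one, ofReal_one,
      one_mul, zero_add]
    linear_combination (γ : ℂ) ^ 2 * exp_ofReal_mul_I_mul_conj s
  rw [gptInt, intervalIntegral.integral_congr fun s _ => hpoint s,
    integral_eval_conj_exp_ofReal_mul_I, coeff_add, coeff_C_zero, coeff_C_mul, coeff_X_zero,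
    mul_zero, add_zero]

lemma gptInt_one_data2_two (hρ : D.ρ = circleMap a₀ γ) (hν : D.ν = circleMap 0 1) (hγ : 0 ≤ γ) :
    D.gptInt 1 (D.data2 2) = 4 * π * conj a₀ * γ ^ 2 := by
  have hpoint : ∀ s : ℝ, D.ρ s ^ 1 * D.data2 2 s * ((D.arc s : ℝ) : ℂ)
      = (C (2 * γ ^ 2 * conj a₀) + C (2 * γ * (a₀ * conj a₀ + γ ^ 2)) * X
          + C (2 * a₀ * γ ^ 2) * X ^ 2).eval (conj (exp (s * I))) := fun s => by
    simp only [data2, data1, arc_eq_of_ρ_eq_circleMap hρ hγ, hρ, hν, circleMap, eval_add,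
      eval_C, eval_mul, eval_X, eval_pow, eval_ofNat, pow_one, Nat.cast_ofNat, Nat.add_one_sub_one,
      ofReal_one, one_mul, zero_add, map_mul, map_ofNat, map_add, conj_ofReal]
    linear_combination 2 * (γ : ℂ) ^ 2 * (conj a₀ + γ * conj (exp (s * I))) *
      exp_ofReal_mul_I_mul_conj s
  rw [gptInt, intervalIntegral.integral_congr fun s _ => hpoint s,
    integral_eval_conj_exp_ofReal_mul_I, coeff_add, coeff_add, coeff_C_zero, coeff_C_mul,
    coeff_C_mul, coeff_X_zero, coeff_X_pow, if_neg two_ne_zero.symm]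
  ring

end C2Domain

theorem gpt_disk_general
    (a₀ : ℂ) (γD : ℝ) (hγ : 0 < γD)
    (D : C2Domain)
    (hρ : ∀ t : ℝ, D.ρ t = a₀ + (γD : ℂ) * Complex.exp (Complex.I * t))
    (hν : ∀ t : ℝ, D.ν t = Complex.exp (Complex.I * t))
    (lam : ℝ) (hlam : 1 / 2 ≤ |lam|)
    (ψ : ℕ → ℝ → ℂ)
    (hψ : ∀ m, 1 ≤ m → IsGPTDensity D lam (D.data2 m) (ψ m)) :
    D.gptInt 1 (ψ 1) = ((2 * π * γD ^ 2 / lam : ℝ) : ℂ) ∧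
    D.gptInt 1 (ψ 2) = 2 * (starRingEnd ℂ) a₀ * D.gptInt 1 (ψ 1) ∧
    D.gptInt 1 (ψ 2) = 4 * (π : ℂ) * (starRingEnd ℂ) a₀ * ((γD ^ 2 / lam : ℝ) : ℂ) := by
  have hρ' : D.ρ = circleMap a₀ γD := funext fun t => by rw [hρ, circleMap, mul_comm I]
  have hν' : D.ν = circleMap 0 1 := funext fun t => by
    rw [hν, circleMap, ofReal_one, one_mul, zero_add, mul_comm I]
  have hlam₀ : lam ≠ 0 := by
    rintro rfl
    norm_num at hlam
  have hψ_eq : ∀ m, 1 ≤ m → ψ m = fun t => D.data2 m t / lam := fun m hm =>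
    (hψ m hm).eq_div hlam₀ (C2Domain.npStar_eq_zero_of_ρ_eq_circleMap hρ' hν' (hψ m hm).meanZero)
  have h₁ : D.gptInt 1 (ψ 1) = ((2 * π * γD ^ 2 / lam : ℝ) : ℂ) := by
    rw [hψ_eq 1 le_rfl, C2Domain.gptInt_div_const,
      C2Domain.gptInt_one_data2_one hρ' hν' hγ.le]
    push_cast
    ring
  have h₂ : D.gptInt 1 (ψ 2) = 4 * (π : ℂ) * (starRingEnd ℂ) a₀ * ((γD ^ 2 / lam : ℝ) : ℂ) := by
    rw [hψ_eq 2 one_le_two, C2Domain.gptInt_div_const,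
      C2Domain.gptInt_one_data2_two hρ' hν' hγ.le]
    push_cast
    ring
  refine ⟨h₁, ?_, h₂⟩
  rw [h₁, h₂]
  push_cast
  ring

/-- Let `D` be the open disk of radius `γ_D > 0` centered at `a₀ ∈ ℂ`
(with its standard boundary parametrization `t ↦ a₀ + γ_D e^{it}` and outward normal
`t ↦ e^{it}`) and `λ ∈ ℝ` with `|λ| ≥ 1/2`.  Then the generalized polarization
tensors of `D` satisfy `N⁽²⁾₁₁(D,λ) = 2πγ_D²/λ` and
`N⁽²⁾₂₁(D,λ) = 2·conj(a₀)·N⁽²⁾₁₁(D,λ) = 4π·conj(a₀)·γ_D²/λ`. -/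
theorem gpt_disk
    (a₀ : ℂ) (γD : ℝ) (hγ : 0 < γD)
    (D : C2Domain)
    (hcar : D.carrier = Metric.ball a₀ γD)
    (hρ : ∀ t : ℝ, D.ρ t = a₀ + (γD : ℂ) * Complex.exp (Complex.I * t))
    (hν : ∀ t : ℝ, D.ν t = Complex.exp (Complex.I * t))
    (lam : ℝ) (hlam : 1 / 2 ≤ |lam|)
    (ψ : ℕ → ℝ → ℂ)
    (hψ : ∀ m, 1 ≤ m → IsGPTDensity D lam (D.data2 m) (ψ m)) :
    D.gptInt 1 (ψ 1) = ((2 * π * γD ^ 2 / lam : ℝ) : ℂ) ∧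
    D.gptInt 1 (ψ 2) = 2 * (starRingEnd ℂ) a₀ * D.gptInt 1 (ψ 1) ∧
    D.gptInt 1 (ψ 2) = 4 * (π : ℂ) * (starRingEnd ℂ) a₀ * ((γD ^ 2 / lam : ℝ) : ℂ) :=
  gpt_disk_general a₀ γD hγ D hρ hν lam hlam ψ hψ
end

section
/- Let λ ∈ ℝ with |λ| > 1/2, let γ > 0 and e_1 ∈ ℂ with |e_1| < γ², and define N₁ = 4π·e_1·(γ⁴ − |e_1|²)/(4λ²γ⁴ − |e_1|²) and N₂ = 8πλ·γ²·(γ⁴ − |e_1|²)/(4λ²γ⁴ − |e_1|²) (these are the first-order Faber polynomial polarization tensors F^{(1)}_{11} and F^{(2)}_{11} of the ellipse with exterior conformal map w ↦ w + e_0 + e_1/w on |w| > γ). Then |N₂|² − 4λ²|N₁|² ≠ 0, N₂ ≠ 0, and the ellipse parameters are recovered from (N₁, N₂) by the formulas γ² = (λ·N₂/(2π))·(|N₂|² − |N₁|²)/(|N₂|² − 4λ²|N₁|²) and e_1 = 2λγ²·N₁/N₂. -/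
/-!
Both tensors are real multiples of the same positive factor `P = 4π(γ⁴ − |e₁|²)/(4λ²γ⁴ − |e₁|²)`:
`N₁ = P e₁` and `N₂ = 2λγ² P`. Hence `|N₂|² − 4λ²|N₁|² = 4λ²P²(γ⁴ − |e₁|²) > 0` and
`|N₂|² − |N₁|² = P²(4λ²γ⁴ − |e₁|²)`, and the two recovery formulas become identities in `P`.
-/

open Real

noncomputable def fptFactor (lam γ a : ℝ) : ℝ :=
  4 * π * (γ ^ 4 - a ^ 2) / (4 * lam ^ 2 * γ ^ 4 - a ^ 2)

lemma one_lt_four_mul_sq_of_half_lt_abs {lam : ℝ} (hlam : 1 / 2 < |lam|) : 1 < 4 * lam ^ 2 := by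
  nlinarith [sq_abs lam, abs_nonneg lam]

section

variable {lam γ a : ℝ}

lemma pow_four_sub_sq_pos (ha : 0 ≤ a) (haγ : a < γ ^ 2) : 0 < γ ^ 4 - a ^ 2 := by
  nlinarith

lemma four_mul_sq_mul_pow_four_sub_sq_pos (hlam : 1 < 4 * lam ^ 2) (ha : 0 ≤ a) (haγ : a < γ ^ 2) :
    0 < 4 * lam ^ 2 * γ ^ 4 - a ^ 2 := by
  nlinarith [pow_four_sub_sq_pos ha haγ, pow_pos (ha.trans_lt haγ) 2]

lemma fptFactor_pos (hlam : 1 < 4 * lam ^ 2) (ha : 0 ≤ a) (haγ : a < γ ^ 2) :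
    0 < fptFactor lam γ a :=
  div_pos (by have := pow_four_sub_sq_pos ha haγ; positivity)
    (four_mul_sq_mul_pow_four_sub_sq_pos hlam ha haγ)

lemma four_pi_mul_div_eq_mul_fptFactor (e : ℂ) :
    4 * (π : ℂ) * e * ((γ : ℂ) ^ 4 - (a : ℂ) ^ 2) / (4 * (lam : ℂ) ^ 2 * (γ : ℂ) ^ 4 - (a : ℂ) ^ 2) =
      e * fptFactor lam γ a := by
  unfold fptFactor
  push_cast
  ring

lemma eight_pi_mul_div_eq_mul_fptFactor :
    8 * (π : ℂ) * lam * (γ : ℂ) ^ 2 * ((γ : ℂ) ^ 4 - (a : ℂ) ^ 2) /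
        (4 * (lam : ℂ) ^ 2 * (γ : ℂ) ^ 4 - (a : ℂ) ^ 2) =
      ((2 * lam * γ ^ 2 * fptFactor lam γ a : ℝ) : ℂ) := by
  unfold fptFactor
  push_cast
  ring

lemma fptFactor_mul (hD : 4 * lam ^ 2 * γ ^ 4 - a ^ 2 ≠ 0) :
    fptFactor lam γ a * (4 * lam ^ 2 * γ ^ 4 - a ^ 2) = 4 * π * (γ ^ 4 - a ^ 2) :=
  div_mul_cancel₀ _ hD

lemma mul_div_mul_eq_sq_of_mul_eq {P : ℝ} (hlam : lam ≠ 0) (hR : γ ^ 4 - a ^ 2 ≠ 0)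
    (hPD : P * (4 * lam ^ 2 * γ ^ 4 - a ^ 2) = 4 * π * (γ ^ 4 - a ^ 2)) :
    lam * (2 * lam * γ ^ 2 * P) / (2 * π) *
        (((2 * lam * γ ^ 2 * P) ^ 2 - a ^ 2 * P ^ 2) /
          (4 * lam ^ 2 * P ^ 2 * (γ ^ 4 - a ^ 2))) = γ ^ 2 := by
  field_simp
  linear_combination γ ^ 2 * hPD

end

theorem ellipse_parameters_from_first_FPTs_general
    (lam : ℝ) (hlam : 1 / 2 < |lam|)
    (γ : ℝ) (e₁ : ℂ) (he₁ : ‖e₁‖ < γ ^ 2)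
    (N₁ N₂ : ℂ)
    (hN₁ : N₁ = 4 * Real.pi * e₁ * ((γ : ℂ) ^ 4 - (‖e₁‖ : ℂ) ^ 2) /
        (4 * (lam : ℂ) ^ 2 * (γ : ℂ) ^ 4 - (‖e₁‖ : ℂ) ^ 2))
    (hN₂ : N₂ = 8 * Real.pi * (lam : ℂ) * (γ : ℂ) ^ 2 *
        ((γ : ℂ) ^ 4 - (‖e₁‖ : ℂ) ^ 2) /
        (4 * (lam : ℂ) ^ 2 * (γ : ℂ) ^ 4 - (‖e₁‖ : ℂ) ^ 2)) :
    (‖N₂‖ ^ 2 - 4 * lam ^ 2 * ‖N₁‖ ^ 2 ≠ 0) ∧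
    N₂ ≠ 0 ∧
    ((γ : ℂ) ^ 2 = ((lam : ℂ) * N₂ / (2 * Real.pi)) *
        (((‖N₂‖ ^ 2 - ‖N₁‖ ^ 2 : ℝ) : ℂ) /
          ((‖N₂‖ ^ 2 - 4 * lam ^ 2 * ‖N₁‖ ^ 2 : ℝ) : ℂ))) ∧
    e₁ = 2 * (lam : ℂ) * (γ : ℂ) ^ 2 * N₁ / N₂ := by
  set a := ‖e₁‖
  have ha : 0 ≤ a := norm_nonneg e₁
  have hlam4 := one_lt_four_mul_sq_of_half_lt_abs hlam
  have hlam0 : lam ≠ 0 := by rintro rfl; norm_num at hlam4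
  have hγ0 : γ ≠ 0 := by rintro rfl; norm_num at he₁; linarith
  have hR := pow_four_sub_sq_pos ha he₁
  have hD := four_mul_sq_mul_pow_four_sub_sq_pos hlam4 ha he₁
  set P := fptFactor lam γ a
  have hP : 0 < P := fptFactor_pos hlam4 ha he₁
  have hN₁P : N₁ = e₁ * P := hN₁.trans (four_pi_mul_div_eq_mul_fptFactor e₁)
  have hN₂P : N₂ = ((2 * lam * γ ^ 2 * P : ℝ) : ℂ) := hN₂.trans eight_pi_mul_div_eq_mul_fptFactor
  have hN₂0 : N₂ ≠ 0 := by rw [hN₂P]; exact_mod_cast (by positivity : 2 * lam * γ ^ 2 * P ≠ 0)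
  have hnorm₁ : ‖N₁‖ ^ 2 = a ^ 2 * P ^ 2 := by
    rw [hN₁P, norm_mul, Complex.norm_real, norm_of_nonneg hP.le, mul_pow]
  have hnorm₂ : ‖N₂‖ ^ 2 = (2 * lam * γ ^ 2 * P) ^ 2 := by
    rw [hN₂P, Complex.norm_real, norm_eq_abs, sq_abs]
  have hdisc : ‖N₂‖ ^ 2 - 4 * lam ^ 2 * ‖N₁‖ ^ 2 = 4 * lam ^ 2 * P ^ 2 * (γ ^ 4 - a ^ 2) := by
    rw [hnorm₁, hnorm₂]; ring
  refine ⟨by rw [hdisc]; positivity, hN₂0, ?_, ?_⟩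
  · rw [hdisc, hnorm₂, hnorm₁, hN₂P]
    exact_mod_cast (mul_div_mul_eq_sq_of_mul_eq hlam0 hR.ne' (fptFactor_mul hD.ne')).symm
  · rw [eq_div_iff hN₂0, hN₁P, hN₂P]
    push_cast
    ring

/-- Let `λ ∈ ℝ` with `|λ| > 1/2`, `γ > 0` and `e₁ ∈ ℂ` with `|e₁| < γ²`.
Define `N₁ = 4π·e₁·(γ⁴ − |e₁|²)/(4λ²γ⁴ − |e₁|²)` and
`N₂ = 8πλ·γ²·(γ⁴ − |e₁|²)/(4λ²γ⁴ − |e₁|²)` (the first-order FPTs `F⁽¹⁾₁₁` and `F⁽²⁾₁₁`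
of the ellipse with exterior conformal map `w ↦ w + e₀ + e₁/w` on `|w| > γ`).
Then `|N₂|² − 4λ²|N₁|² ≠ 0`, `N₂ ≠ 0`, and
`γ² = (λ·N₂/(2π))·(|N₂|² − |N₁|²)/(|N₂|² − 4λ²|N₁|²)` and `e₁ = 2λγ²·N₁/N₂`. -/
theorem ellipse_parameters_from_first_FPTs
    (lam : ℝ) (hlam : 1 / 2 < |lam|)
    (γ : ℝ) (hγ : 0 < γ) (e₁ : ℂ) (he₁ : ‖e₁‖ < γ ^ 2)
    (N₁ N₂ : ℂ)
    (hN₁ : N₁ = 4 * Real.pi * e₁ * ((γ : ℂ) ^ 4 - (‖e₁‖ : ℂ) ^ 2) /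
        (4 * (lam : ℂ) ^ 2 * (γ : ℂ) ^ 4 - (‖e₁‖ : ℂ) ^ 2))
    (hN₂ : N₂ = 8 * Real.pi * (lam : ℂ) * (γ : ℂ) ^ 2 *
        ((γ : ℂ) ^ 4 - (‖e₁‖ : ℂ) ^ 2) /
        (4 * (lam : ℂ) ^ 2 * (γ : ℂ) ^ 4 - (‖e₁‖ : ℂ) ^ 2)) :
    (‖N₂‖ ^ 2 - 4 * lam ^ 2 * ‖N₁‖ ^ 2 ≠ 0) ∧
    N₂ ≠ 0 ∧
    ((γ : ℂ) ^ 2 = ((lam : ℂ) * N₂ / (2 * Real.pi)) *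
        (((‖N₂‖ ^ 2 - ‖N₁‖ ^ 2 : ℝ) : ℂ) /
          ((‖N₂‖ ^ 2 - 4 * lam ^ 2 * ‖N₁‖ ^ 2 : ℝ) : ℂ))) ∧
    e₁ = 2 * (lam : ℂ) * (γ : ℂ) ^ 2 * N₁ / N₂ :=
  ellipse_parameters_from_first_FPTs_general lam hlam γ e₁ he₁ N₁ N₂ hN₁ hN₂
end
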